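/- For every integer d ≥ 3 there exists a constant c₃ > 0 (depending only on d) such that for every λ > 0 and every p ∈ 𝕋ᵈ, Im ω(p) ≤ −c₃ λ² D(p)^{d−2}, where D(p) := min{ |p − v| : v = 0 or v = (±1/2, ±1/2, …, ±1/2) } is the distance (on the torus) from p to the set consisting of the origin and the vertices of 𝕋ᵈ. -/

import Mathlib

open MeasureTheory Filter Topology Real
open scoped ENNReal

noncomputable section

/-- The torus `𝕋ᵈ = [-1/2, 1/2]ᵈ` realized as a box in `ℝᵈ`. -/
def Td (d : ℕ) : Set (Fin d → ℝ) := Set.pi Set.univ fun _ => Set.Icc (-(1/2) : ℝ) (1/2)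

/-- The lattice dispersion relation `e(p) = ∑_{j=1}^d (1 - cos(2π p_j))`. -/
def edispD (d : ℕ) (p : Fin d → ℝ) : ℝ := ∑ j, (1 - Real.cos (2 * Real.pi * p j))

/-- `Θ_ε(α) = ∫_{𝕋ᵈ} dq / (α - e(q) + iε)`. -/
def ThetaEpsD (d : ℕ) (ε α : ℝ) : ℂ :=
  ∫ q in Td d, ((α : ℂ) - (edispD d q : ℂ) + (ε : ℂ) * Complex.I)⁻¹

/-- `Θ` is the limit of `Θ_ε` as `ε → 0⁺`. -/
def IsThetaLimitD (d : ℕ) (Θ : ℝ → ℂ) : Prop :=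
  ∀ α : ℝ, Tendsto (fun ε => ThetaEpsD d ε α) (𝓝[>] (0 : ℝ)) (𝓝 (Θ α))

/-- The Euclidean norm on `ℝᵈ`. -/
def enormD (d : ℕ) (p : Fin d → ℝ) : ℝ := Real.sqrt (∑ j, (p j) ^ 2)

/-- Distance between two points of the circle `ℝ/ℤ`. -/
def cdist (x y : ℝ) : ℝ := |x - y - (round (x - y) : ℝ)|

/-- Torus (Euclidean) distance on `𝕋ᵈ`. -/
def tdistD (d : ℕ) (p q : Fin d → ℝ) : ℝ := Real.sqrt (∑ j, (cdist (p j) (q j)) ^ 2)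

/-- `D(p)`: torus distance from `p` to the set consisting of the origin and the vertices
`(±1/2, …, ±1/2)` of `𝕋ᵈ` (on the torus all vertices coincide with `(1/2, …, 1/2)`). -/
def Dpt (d : ℕ) (p : Fin d → ℝ) : ℝ := min (tdistD d p 0) (tdistD d p fun _ => 1/2)

/-- Jordan-type: `8 r² ≤ 1 - cos(2πx)` with `r = x - round x`. -/
lemma aux_one_sub_cos_ge (x : ℝ) :
    8 * (x - (round x : ℝ)) ^ 2 ≤ 1 - Real.cos (2 * Real.pi * x) := by
  set r : ℝ := x - (round x : ℝ) with hr
  have hper : Real.cos (2 * Real.pi * x) = Real.cos (2 * Real.pi * r) := by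
    rw [hr]
    rw [show 2 * Real.pi * (x - (round x : ℝ)) = 2 * Real.pi * x - (round x : ℤ) * (2 * Real.pi) by
      push_cast; ring]
    exact (Real.cos_sub_int_mul_two_pi _ _).symm
  have habs : |r| ≤ 1 / 2 := abs_sub_round x
  have h1 : 1 - Real.cos (2 * Real.pi * r) = 2 * Real.sin (Real.pi * r) ^ 2 := by
    have := Real.sin_sq_eq_half_sub (Real.pi * r)
    rw [show 2 * (Real.pi * r) = 2 * Real.pi * r by ring] at this
    linarith
  have hsin : 2 * |r| ≤ Real.sin (Real.pi * |r|) := by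
    have h1' : (0:ℝ) ≤ Real.pi * |r| := by positivity
    have h2' : Real.pi * |r| ≤ Real.pi / 2 := by
      nlinarith [Real.pi_pos]
    have := Real.mul_le_sin h1' h2'
    calc 2 * |r| = 2 / Real.pi * (Real.pi * |r|) := by field_simp
    _ ≤ Real.sin (Real.pi * |r|) := this
  have hsq : Real.sin (Real.pi * r) ^ 2 = Real.sin (Real.pi * |r|) ^ 2 := by
    rcases abs_cases r with ⟨h, _⟩ | ⟨h, _⟩
    · rw [h]
    · rw [h]; rw [show Real.pi * -r = -(Real.pi * r) by ring, Real.sin_neg]; ring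
  have : 4 * r ^ 2 ≤ Real.sin (Real.pi * |r|) ^ 2 := by
    nlinarith [abs_nonneg r, sq_abs r]
  rw [hper, h1, hsq]; linarith

/-- arccos gap lower bound. -/
lemma aux_arccos_gap {u v : ℝ} (h0 : 0 ≤ u) (huv : u ≤ v) (hv2 : v ≤ 2) :
    (v - u) / (Real.pi * Real.sqrt v) ≤ Real.arccos (1 - v) - Real.arccos (1 - u) := by
  set a := Real.arccos (1 - u) with ha
  set b := Real.arccos (1 - v) with hb
  have ha0 : 0 ≤ a := Real.arccos_nonneg _
  have hb0 : 0 ≤ b := Real.arccos_nonneg _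
  have hapi : a ≤ Real.pi := Real.arccos_le_pi _
  have hbpi : b ≤ Real.pi := Real.arccos_le_pi _
  have hcb : Real.cos b = 1 - v := Real.cos_arccos (by linarith) (by linarith)
  have hca : Real.cos a = 1 - u := Real.cos_arccos (by linarith) (by linarith)
  have hab : a ≤ b := by
    rw [ha, hb]
    rcases eq_or_lt_of_le huv with rfl | hlt
    · exact le_refl _
    · exact le_of_lt (Real.strictAntiOn_arccos ⟨by linarith, by linarith⟩
        ⟨by linarith, by linarith⟩ (by linarith))
  -- v - u ≤ b * (b - a)
  have key : v - u ≤ b * (b - a) := by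
    have hid : Real.cos a - Real.cos b
        = 2 * Real.sin ((a + b) / 2) * Real.sin ((b - a) / 2) := by
      rw [Real.cos_sub_cos]
      rw [show (a - b) / 2 = -((b - a) / 2) by ring, Real.sin_neg]; ring
    have hs1 : Real.sin ((a + b) / 2) ≤ (a + b) / 2 := Real.sin_le (by linarith)
    have hs2 : Real.sin ((b - a) / 2) ≤ (b - a) / 2 := Real.sin_le (by linarith)
    have hn1 : 0 ≤ Real.sin ((a + b) / 2) :=
      Real.sin_nonneg_of_nonneg_of_le_pi (by linarith) (by linarith)
    have hn2 : 0 ≤ Real.sin ((b - a) / 2) :=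
      Real.sin_nonneg_of_nonneg_of_le_pi (by linarith) (by linarith)
    nlinarith [hca, hcb]
  -- b ≤ π √v
  have hbv : b ≤ Real.pi * Real.sqrt v := by
    have hjordan : b / Real.pi ≤ Real.sin (b / 2) := by
      have := Real.mul_le_sin (x := b / 2) (by linarith) (by linarith)
      calc b / Real.pi = 2 / Real.pi * (b / 2) := by field_simp
      _ ≤ Real.sin (b / 2) := this
    have hpp := Real.pi_pos
    have hhalf : Real.sin (b / 2) ^ 2 = 1 / 2 - Real.cos b / 2 := by
      have := Real.sin_sq_eq_half_sub (b / 2)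
      rw [show 2 * (b / 2) = b by ring] at this; exact this
    have hsq2 : (b / Real.pi) ^ 2 ≤ Real.sin (b / 2) ^ 2 :=
      pow_le_pow_left₀ (div_nonneg hb0 hpp.le) hjordan 2
    have hv' : b ^ 2 / Real.pi ^ 2 ≤ v / 2 := by
      rw [← div_pow]; nlinarith [hsq2, hhalf, hcb]
    have hbsq : b ^ 2 ≤ Real.pi ^ 2 * v := by
      rw [div_le_iff₀ (by positivity : (0:ℝ) < Real.pi ^ 2)] at hv'
      nlinarith [hv']
    have : b ^ 2 ≤ (Real.pi * Real.sqrt v) ^ 2 := by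
      rw [mul_pow, Real.sq_sqrt (by linarith : (0:ℝ) ≤ v)]; exact hbsq
    have hrhs : 0 ≤ Real.pi * Real.sqrt v := by positivity
    nlinarith [this]
  rcases eq_or_lt_of_le (le_trans h0 huv) with rfl | hv0
  · have hu0 : u = 0 := le_antisymm huv h0
    simpa [hu0, sub_nonneg] using hab
  have hb0' : 0 < b := by
    by_contra h
    push_neg at h
    have : b = 0 := le_antisymm h hb0
    rw [this] at hcb
    have := Real.cos_zero
    nlinarith [hcb]
  have hpv : 0 < Real.pi * Real.sqrt v := by positivity
  rw [div_le_iff₀ hpv]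
  calc v - u ≤ b * (b - a) := key
  _ ≤ (Real.pi * Real.sqrt v) * (b - a) := by nlinarith [hbv, hab]
  _ = (b - a) * (Real.pi * Real.sqrt v) := by ring

/-- `gI s = arccos(1-s)/(2π)`, the inverse of `x ↦ 1 - cos (2πx)` on `[0, 1/2]`. -/
def gI (s : ℝ) : ℝ := Real.arccos (1 - s) / (2 * Real.pi)

lemma gI_nonneg (s : ℝ) : 0 ≤ gI s :=
  div_nonneg (Real.arccos_nonneg _) (by positivity)

lemma gI_le_half (s : ℝ) : gI s ≤ 1 / 2 := by
  rw [gI, div_le_iff₀ (by positivity : (0:ℝ) < 2 * Real.pi)]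
  have := Real.arccos_le_pi (1 - s)
  linarith

lemma cos_mem_of_mem_gI {u v x : ℝ} (h0 : 0 ≤ u) (huv : u ≤ v) (hv2 : v ≤ 2)
    (hx : x ∈ Set.Icc (gI u) (gI v)) :
    u ≤ 1 - Real.cos (2 * Real.pi * x) ∧ 1 - Real.cos (2 * Real.pi * x) ≤ v := by
  obtain ⟨hx1, hx2⟩ := hx
  have h2pi : (0:ℝ) < 2 * Real.pi := by positivity
  have ha : Real.arccos (1 - u) ≤ 2 * Real.pi * x := by
    rw [gI, div_le_iff₀ h2pi] at hx1; linarith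
  have hb : 2 * Real.pi * x ≤ Real.arccos (1 - v) := by
    rw [gI, le_div_iff₀ h2pi] at hx2; linarith
  have hca : Real.cos (Real.arccos (1 - u)) = 1 - u :=
    Real.cos_arccos (by linarith) (by linarith)
  have hcb : Real.cos (Real.arccos (1 - v)) = 1 - v :=
    Real.cos_arccos (by linarith) (by linarith)
  constructor
  · have := Real.cos_le_cos_of_nonneg_of_le_pi (Real.arccos_nonneg (1 - u))
      (le_trans hb (Real.arccos_le_pi _)) ha
    rw [hca] at this; linarith
  · have := Real.cos_le_cos_of_nonneg_of_le_pi
      (le_trans (Real.arccos_nonneg (1 - u)) ha) (Real.arccos_le_pi _) hb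
    rw [hcb] at this; linarith

lemma gI_gap {u v : ℝ} (h0 : 0 ≤ u) (huv : u ≤ v) (hv2 : v ≤ 2) :
    (v - u) / (2 * Real.pi ^ 2 * Real.sqrt v) ≤ gI v - gI u := by
  have h := aux_arccos_gap h0 huv hv2
  have h2pi : (0:ℝ) < 2 * Real.pi := by positivity
  have heq : gI v - gI u = (Real.arccos (1 - v) - Real.arccos (1 - u)) / (2 * Real.pi) := by
    rw [gI, gI, ← sub_div]
  have heq2 : (v - u) / (2 * Real.pi ^ 2 * Real.sqrt v)
      = ((v - u) / (Real.pi * Real.sqrt v)) / (2 * Real.pi) := by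
    rw [div_div]; ring_nf
  rw [heq, heq2]
  gcongr

-- basic bounds on edispD
lemma edispD_nonneg (d : ℕ) (p : Fin d → ℝ) : 0 ≤ edispD d p :=
  Finset.sum_nonneg fun j _ => by nlinarith [Real.cos_le_one (2 * Real.pi * p j)]

lemma edispD_le (d : ℕ) (p : Fin d → ℝ) : edispD d p ≤ 2 * d := by
  calc edispD d p ≤ ∑ _j : Fin d, (2:ℝ) :=
    Finset.sum_le_sum fun j _ => by nlinarith [Real.neg_one_le_cos (2 * Real.pi * p j)]
  _ = 2 * d := by simp [mul_comm]

lemma edispD_reflect (d : ℕ) (q : Fin d → ℝ) :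
    edispD d (fun j => 1 / 2 - q j) = 2 * d - edispD d q := by
  have : ∀ j : Fin d, 1 - Real.cos (2 * Real.pi * (1 / 2 - q j))
      = 2 - (1 - Real.cos (2 * Real.pi * q j)) := by
    intro j
    rw [show 2 * Real.pi * (1 / 2 - q j) = Real.pi - 2 * Real.pi * q j by ring,
      Real.cos_pi_sub]
    ring
  rw [edispD, edispD]
  rw [Finset.sum_congr rfl fun j _ => this j, Finset.sum_sub_distrib]
  simp [mul_comm]

lemma edispD_cons (n : ℕ) (x : ℝ) (y : Fin n → ℝ) :
    edispD (n + 1) (Fin.cons x y) = (1 - Real.cos (2 * Real.pi * x)) + edispD n y := by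
  rw [edispD, Fin.sum_univ_succ]
  simp [edispD]

/-- Splitting a pi-lintegral over a box into outer/inner integrals. -/
lemma lintegral_pi_split (n : ℕ) (F : (Fin (n + 1) → ℝ) → ℝ≥0∞) (hF : Measurable F)
    (I0 I1 : Set ℝ) (hI0 : MeasurableSet I0) (hI1 : MeasurableSet I1) :
    ∫⁻ q in Set.pi Set.univ (fun j : Fin (n + 1) => if j = 0 then I0 else I1), F q
      = ∫⁻ y in Set.pi Set.univ (fun _ : Fin n => I1), ∫⁻ x in I0, F (Fin.cons x y) := by
  set S := Set.pi Set.univ (fun j : Fin (n + 1) => if j = 0 then I0 else I1) with hS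
  set B := Set.pi Set.univ (fun _ : Fin n => I1) with hB
  have hSm : MeasurableSet S := MeasurableSet.univ_pi fun j => by
    by_cases h : j = 0 <;> simp [h, hI0, hI1]
  have hBm : MeasurableSet B := MeasurableSet.univ_pi fun _ => hI1
  have hmem : ∀ (x : ℝ) (y : Fin n → ℝ), Fin.cons x y ∈ S ↔ x ∈ I0 ∧ ∀ j, y j ∈ I1 := by
    intro x y
    constructor
    · intro h
      refine ⟨by simpa using h 0 (Set.mem_univ _), fun j => ?_⟩
      have := h j.succ (Set.mem_univ _)
      simpa [Fin.succ_ne_zero] using this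
    · rintro ⟨hx, hy⟩ i _
      refine Fin.cases ?_ (fun j => ?_) i
      · simpa using hx
      · simpa [Fin.succ_ne_zero] using hy j
  have mp := (volume_preserving_piFinSuccAbove (fun _ : Fin (n + 1) => ℝ) 0).symm
  rw [← lintegral_indicator hSm]
  rw [mp.lintegral_map_equiv (fun q => Set.indicator S F q)
    (MeasurableEquiv.piFinSuccAbove (fun _ : Fin (n + 1) => ℝ) 0).symm]
  have hind : Measurable (Set.indicator S F) := hF.indicator hSm
  have hcons : ∀ z : ℝ × (Fin n → ℝ),
      (MeasurableEquiv.piFinSuccAbove (fun _ : Fin (n + 1) => ℝ) 0).symm z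
        = Fin.cons z.1 z.2 := by
    intro z
    simp only [MeasurableEquiv.piFinSuccAbove_symm_apply, Fin.insertNthEquiv,
      Equiv.coe_fn_mk, Fin.insertNth_zero]
    rfl
  rw [MeasureTheory.Measure.volume_eq_prod]
  rw [lintegral_prod_symm' _ (by
    apply Measurable.comp hind
    exact (MeasurableEquiv.piFinSuccAbove (fun _ : Fin (n + 1) => ℝ) 0).symm.measurable)]
  have hpt : ∀ y : Fin n → ℝ,
      (∫⁻ x, Set.indicator S F
        ((MeasurableEquiv.piFinSuccAbove (fun _ : Fin (n + 1) => ℝ) 0).symm (x, y)))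
      = Set.indicator B (fun y => ∫⁻ x in I0, F (Fin.cons x y)) y := by
    intro y
    by_cases hy : ∀ j, y j ∈ I1
    · rw [Set.indicator_of_mem (show y ∈ B from fun j _ => hy j)]
      rw [← lintegral_indicator hI0]
      congr 1
      funext x
      rw [hcons (x, y)]
      by_cases hx : x ∈ I0
      · rw [Set.indicator_of_mem ((hmem x y).2 ⟨hx, hy⟩), Set.indicator_of_mem hx]
      · rw [Set.indicator_of_notMem (fun h => hx ((hmem x y).1 h).1),
          Set.indicator_of_notMem hx]
    · have hyB : y ∉ B := fun h => hy (fun j => h j (Set.mem_univ _))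
      rw [Set.indicator_of_notMem hyB]
      have : ∀ x : ℝ, Set.indicator S F
          ((MeasurableEquiv.piFinSuccAbove (fun _ : Fin (n + 1) => ℝ) 0).symm (x, y)) = 0 := by
        intro x
        rw [hcons (x, y)]
        exact Set.indicator_of_notMem (fun h => hy ((hmem x y).1 h).2) F
      rw [lintegral_congr this, lintegral_zero]
  rw [lintegral_congr hpt, lintegral_indicator hBm]

/-- The box `[0, 1/2]^d`. -/
def Bp (d : ℕ) : Set (Fin d → ℝ) := Set.pi Set.univ fun _ => Set.Icc (0:ℝ) (1/2)

lemma measurable_edispD (d : ℕ) : Measurable (edispD d) := by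
  apply Finset.measurable_sum
  intro j _
  exact measurable_const.sub
    (Real.continuous_cos.measurable.comp ((measurable_pi_apply j).const_mul _))

set_option maxHeartbeats 2000000 in
lemma core_estimate (n : ℕ) (hn : 2 ≤ n) (α ε : ℝ) (hα0 : 0 < α) (hαd : α ≤ (n + 1 : ℝ))
    (hε0 : 0 < ε) (hεα : ε ≤ α / (4 * (n + 1))) :
    ENNReal.ofReal (Real.sqrt α ^ (n - 1) / (60 ^ (n + 1) * ((n:ℝ) + 1) ^ (2 * (n + 1)))) ≤
      ∫⁻ q in Bp (n + 1), ENNReal.ofReal (ε / ((α - edispD (n + 1) q) ^ 2 + ε ^ 2)) := by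
  have hnR : (2:ℝ) ≤ (n:ℝ) := by exact_mod_cast hn
  have hn0 : (0:ℝ) < (n:ℝ) := by linarith
  have hn1 : (0:ℝ) < (n:ℝ) + 1 := by linarith
  have hπ : Real.pi ^ 2 ≤ 10 := by nlinarith [Real.pi_lt_d2, Real.pi_pos]
  have hπ0 := Real.pi_pos
  set s := Real.sqrt α with hs
  have hs0 : 0 < s := Real.sqrt_pos.2 hα0
  have hs2 : s ^ 2 = α := Real.sq_sqrt hα0.le
  set t := α / ((n:ℝ) + 1) with ht
  have ht0 : 0 < t := by positivity
  have ht1 : t ≤ 1 := by rw [ht, div_le_one hn1]; linarith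
  have htα : t ≤ α := by rw [ht, div_le_iff₀ hn1]; nlinarith
  set u := (α - t) / (n:ℝ) with hu
  set v := (α - t / 2) / (n:ℝ) with hv
  have hu0 : 0 ≤ u := by apply div_nonneg _ hn0.le; linarith
  have huv : u ≤ v := by rw [hu, hv]; gcongr <;> linarith
  have hvu : v - u = t / (2 * n) := by rw [hu, hv]; field_simp; ring
  have hvα : v ≤ α := by rw [hv, div_le_iff₀ hn0]; nlinarith
  have hv2 : v ≤ 2 := by
    have h1 : v ≤ ((n:ℝ) + 1) / n := by
      rw [hv, div_le_div_iff₀ hn0 hn0]; nlinarith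
    have h2 : ((n:ℝ) + 1) / n ≤ 2 := by rw [div_le_iff₀ hn0]; linarith
    linarith
  have hv0 : 0 < v := by rw [hv]; apply div_pos _ hn0; nlinarith
  have hεt : ε ≤ t / 4 := by
    rw [ht, div_div, show ((n:ℝ) + 1) * 4 = 4 * ((n:ℝ) + 1) by ring]; exact hεα
  -- the integrand
  set F : (Fin (n + 1) → ℝ) → ℝ≥0∞ :=
    fun q => ENNReal.ofReal (ε / ((α - edispD (n + 1) q) ^ 2 + ε ^ 2)) with hF
  have hFm : Measurable F := ENNReal.measurable_ofReal.comp
    (measurable_const.div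
      (((measurable_const.sub (measurable_edispD (n + 1))).pow_const 2).add measurable_const))
  set L := gI v - gI u with hL
  set B : Set (Fin n → ℝ) := Set.pi Set.univ (fun _ : Fin n => Set.Icc (gI u) (gI v)) with hB
  set S : Set (Fin (n + 1) → ℝ) := Set.pi Set.univ
    (fun j : Fin (n + 1) => if j = 0 then Set.Icc (0:ℝ) (1/2) else Set.Icc (gI u) (gI v))
    with hSdef
  have hsub : S ⊆ Bp (n + 1) := by
    apply Set.pi_mono
    intro j _
    by_cases h : j = 0
    · simp [h]
    · simp only [h, if_false]
      exact Set.Icc_subset_Icc (gI_nonneg u) (gI_le_half v)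
  have stepA : ∫⁻ q in S, F q ≤ ∫⁻ q in Bp (n + 1), F q := lintegral_mono_set hsub
  have stepB : ∫⁻ q in S, F q = ∫⁻ y in B, ∫⁻ x in Set.Icc (0:ℝ) (1/2), F (Fin.cons x y) :=
    lintegral_pi_split n F hFm _ _ measurableSet_Icc measurableSet_Icc
  -- inner bound
  have inner : ∀ y ∈ B,
      ENNReal.ofReal (1 / (40 * s)) ≤ ∫⁻ x in Set.Icc (0:ℝ) (1/2), F (Fin.cons x y) := by
    intro y hy
    have hyj : ∀ j, u ≤ 1 - Real.cos (2 * Real.pi * y j)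
        ∧ 1 - Real.cos (2 * Real.pi * y j) ≤ v :=
      fun j => cos_mem_of_mem_gI hu0 huv hv2 (hy j (Set.mem_univ _))
    have he1 : (n:ℝ) * u ≤ edispD n y := by
      rw [edispD]
      calc (n:ℝ) * u = ∑ _j : Fin n, u := by rw [Finset.sum_const]; simp [mul_comm]
      _ ≤ _ := Finset.sum_le_sum fun j _ => (hyj j).1
    have he2 : edispD n y ≤ (n:ℝ) * v := by
      rw [edispD]
      calc ∑ j : Fin n, (1 - Real.cos (2 * Real.pi * y j)) ≤ ∑ _j : Fin n, v :=
        Finset.sum_le_sum fun j _ => (hyj j).2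
      _ = (n:ℝ) * v := by rw [Finset.sum_const]; simp [mul_comm]
    have hnu : (n:ℝ) * u = α - t := by rw [hu]; field_simp; try ring
    have hnv : (n:ℝ) * v = α - t / 2 := by rw [hv]; field_simp; try ring
    set β := α - edispD n y with hβ
    have hβ1 : t / 2 ≤ β := by rw [hβ]; rw [hnv] at he2; linarith
    have hβ2 : β ≤ t := by rw [hβ]; rw [hnu] at he1; linarith
    have hβε0 : 0 ≤ β - ε := by linarith
    have hβ2' : β ≤ 2 := by linarith
    have hβεβ : β - ε ≤ β := by linarith
    have hβ0 : 0 < β := by linarith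
    have hβs : Real.sqrt β ≤ s := by rw [hs]; exact Real.sqrt_le_sqrt (by linarith)
    have hsβ0 : 0 < Real.sqrt β := Real.sqrt_pos.2 hβ0
    have hJsub : Set.Icc (gI (β - ε)) (gI β) ⊆ Set.Icc (0:ℝ) (1/2) :=
      Set.Icc_subset_Icc (gI_nonneg _) (gI_le_half _)
    have mono1 : ∫⁻ x in Set.Icc (gI (β - ε)) (gI β), F (Fin.cons x y)
        ≤ ∫⁻ x in Set.Icc (0:ℝ) (1/2), F (Fin.cons x y) := lintegral_mono_set hJsub
    have hptw : ∀ x ∈ Set.Icc (gI (β - ε)) (gI β),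
        ENNReal.ofReal (1 / (2 * ε)) ≤ F (Fin.cons x y) := by
      intro x hx
      have hco := cos_mem_of_mem_gI hβε0 hβεβ hβ2' hx
      apply ENNReal.ofReal_le_ofReal
      rw [edispD_cons]
      have h1 : α - ((1 - Real.cos (2 * Real.pi * x)) + edispD n y)
          = β - (1 - Real.cos (2 * Real.pi * x)) := by rw [hβ]; ring
      rw [h1]
      have hdiff : (β - (1 - Real.cos (2 * Real.pi * x))) ^ 2 ≤ ε ^ 2 := by
        nlinarith [hco.1, hco.2]
      rw [div_le_div_iff₀ (by positivity) (by positivity)]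
      nlinarith [hdiff, hε0]
    have hgap := gI_gap hβε0 hβεβ hβ2'
    have hgap2 : ε / (2 * Real.pi ^ 2 * Real.sqrt β) ≤ gI β - gI (β - ε) := by
      have heq : β - (β - ε) = ε := by ring
      rw [heq] at hgap; exact hgap
    calc ENNReal.ofReal (1 / (40 * s))
        ≤ ENNReal.ofReal (1 / (2 * ε)) * ENNReal.ofReal (gI β - gI (β - ε)) := by
          rw [← ENNReal.ofReal_mul (by positivity)]
          apply ENNReal.ofReal_le_ofReal
          have heq3 : 1 / (2 * ε) * (ε / (2 * Real.pi ^ 2 * Real.sqrt β))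
              = 1 / (4 * Real.pi ^ 2 * Real.sqrt β) := by
            field_simp; ring
          calc (1:ℝ) / (40 * s) ≤ 1 / (4 * Real.pi ^ 2 * Real.sqrt β) := by
                apply div_le_div_of_nonneg_left (by norm_num) (by positivity)
                nlinarith [hβs, hsβ0, hs0]
          _ = 1 / (2 * ε) * (ε / (2 * Real.pi ^ 2 * Real.sqrt β)) := heq3.symm
          _ ≤ 1 / (2 * ε) * (gI β - gI (β - ε)) := by gcongr
      _ = ENNReal.ofReal (1 / (2 * ε)) * volume (Set.Icc (gI (β - ε)) (gI β)) := by
          rw [Real.volume_Icc]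
      _ = ∫⁻ _x in Set.Icc (gI (β - ε)) (gI β), ENNReal.ofReal (1 / (2 * ε)) :=
          (setLIntegral_const _ _).symm
      _ ≤ ∫⁻ x in Set.Icc (gI (β - ε)) (gI β), F (Fin.cons x y) :=
          setLIntegral_mono' measurableSet_Icc hptw
      _ ≤ _ := mono1
  -- outer bound
  have hBvol : volume B = ENNReal.ofReal L ^ n := by
    rw [hB, volume_pi_pi]
    simp [Real.volume_Icc, hL]
  have houter : ENNReal.ofReal (1 / (40 * s)) * ENNReal.ofReal L ^ n
      ≤ ∫⁻ y in B, ∫⁻ x in Set.Icc (0:ℝ) (1/2), F (Fin.cons x y) := by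
    calc ENNReal.ofReal (1 / (40 * s)) * ENNReal.ofReal L ^ n
        = ∫⁻ _y in B, ENNReal.ofReal (1 / (40 * s)) := by
          rw [setLIntegral_const, hBvol]
    _ ≤ _ := setLIntegral_mono' (MeasurableSet.univ_pi fun _ => measurableSet_Icc) inner
  -- lower bound for L
  have hsv : Real.sqrt v ≤ s := by rw [hs]; exact Real.sqrt_le_sqrt hvα
  have hsv0 : 0 < Real.sqrt v := Real.sqrt_pos.2 hv0
  have hLlb : s / (40 * ((n:ℝ) + 1) ^ 2) ≤ L := by
    have hgap := gI_gap hu0 huv hv2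
    have hW : v - u = s ^ 2 / (2 * n * ((n:ℝ) + 1)) := by
      rw [hvu, ht, hs2]; field_simp; try ring
      try tauto
    have step1 : (v - u) / (2 * Real.pi ^ 2 * s) ≤ (v - u) / (2 * Real.pi ^ 2 * Real.sqrt v) := by
      apply div_le_div_of_nonneg_left (by linarith) (by positivity)
      nlinarith [hsv]
    have heq : (v - u) / (2 * Real.pi ^ 2 * s) = s / (4 * Real.pi ^ 2 * n * ((n:ℝ) + 1)) := by
      rw [hW]; rw [div_div]; rw [eq_div_iff (by positivity)]
      field_simp
      ring
    have step2 : s / (40 * ((n:ℝ) + 1) ^ 2) ≤ s / (4 * Real.pi ^ 2 * n * ((n:ℝ) + 1)) := by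
      apply div_le_div_of_nonneg_left hs0.le (by positivity)
      nlinarith [hπ, hn0, hn1]
    calc s / (40 * ((n:ℝ) + 1) ^ 2) ≤ s / (4 * Real.pi ^ 2 * n * ((n:ℝ) + 1)) := step2
    _ = (v - u) / (2 * Real.pi ^ 2 * s) := heq.symm
    _ ≤ (v - u) / (2 * Real.pi ^ 2 * Real.sqrt v) := step1
    _ ≤ L := hgap
  have hq0 : (0:ℝ) ≤ s / (40 * ((n:ℝ) + 1) ^ 2) := by positivity
  have hL0 : 0 ≤ L := le_trans hq0 hLlb
  -- final real inequality
  have hsn : s ^ n = s ^ (n - 1) * s := by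
    rw [← pow_succ]; congr 1; omega
  have hre : 1 / (40 * s) * (s / (40 * ((n:ℝ) + 1) ^ 2)) ^ n
      = s ^ (n - 1) / (40 ^ (n + 1) * ((n:ℝ) + 1) ^ (2 * n)) := by
    rw [div_pow, mul_pow, ← pow_mul, hsn]
    rw [pow_succ]
    field_simp
  have hden : (40:ℝ) ^ (n + 1) * ((n:ℝ) + 1) ^ (2 * n)
      ≤ 60 ^ (n + 1) * ((n:ℝ) + 1) ^ (2 * (n + 1)) := by
    apply mul_le_mul
    · exact pow_le_pow_left₀ (by norm_num) (by norm_num) _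
    · apply pow_le_pow_right₀ (by linarith)
      omega
    · positivity
    · positivity
  have hfinal : s ^ (n - 1) / (60 ^ (n + 1) * ((n:ℝ) + 1) ^ (2 * (n + 1)))
      ≤ 1 / (40 * s) * (s / (40 * ((n:ℝ) + 1) ^ 2)) ^ n := by
    rw [hre]
    apply div_le_div_of_nonneg_left (by positivity) (by positivity) hden
  calc ENNReal.ofReal (s ^ (n - 1) / (60 ^ (n + 1) * ((n:ℝ) + 1) ^ (2 * (n + 1))))
      ≤ ENNReal.ofReal (1 / (40 * s) * (s / (40 * ((n:ℝ) + 1) ^ 2)) ^ n) :=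
        ENNReal.ofReal_le_ofReal hfinal
    _ ≤ ENNReal.ofReal (1 / (40 * s) * L ^ n) := by
        apply ENNReal.ofReal_le_ofReal
        gcongr
    _ = ENNReal.ofReal (1 / (40 * s)) * ENNReal.ofReal (L ^ n) :=
        ENNReal.ofReal_mul (by positivity)
    _ = ENNReal.ofReal (1 / (40 * s)) * ENNReal.ofReal L ^ n := by
        rw [ENNReal.ofReal_pow hL0]
    _ ≤ ∫⁻ y in B, ∫⁻ x in Set.Icc (0:ℝ) (1/2), F (Fin.cons x y) := houter
    _ = ∫⁻ q in S, F q := stepB.symm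
    _ ≤ _ := stepA

lemma continuous_edispD (d : ℕ) : Continuous (edispD d) := by
  apply continuous_finset_sum
  intro j _
  exact continuous_const.sub
    (Real.continuous_cos.comp (continuous_const.mul (continuous_apply j)))

lemma measurableSet_Td (d : ℕ) : MeasurableSet (Td d) :=
  MeasurableSet.univ_pi fun _ => measurableSet_Icc

lemma measurableSet_Bp (d : ℕ) : MeasurableSet (Bp d) :=
  MeasurableSet.univ_pi fun _ => measurableSet_Icc

lemma isCompact_Td (d : ℕ) : IsCompact (Td d) :=
  isCompact_univ_pi fun _ => isCompact_Icc

lemma Bp_subset_Td (d : ℕ) : Bp d ⊆ Td d :=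
  Set.pi_mono fun _ _ => Set.Icc_subset_Icc (by norm_num) le_rfl

/-- Imaginary part of `Θ_ε`. -/
lemma im_ThetaEps (d : ℕ) (ε α : ℝ) (hε : 0 < ε) :
    (ThetaEpsD d ε α).im = - ∫ q in Td d, ε / ((α - edispD d q) ^ 2 + ε ^ 2) := by
  have hcd : Continuous fun q : Fin d → ℝ =>
      (α : ℂ) - (edispD d q : ℂ) + (ε : ℂ) * Complex.I :=
    (continuous_const.sub (Complex.continuous_ofReal.comp (continuous_edispD d))).add
      continuous_const
  have hne : ∀ q : Fin d → ℝ, (α : ℂ) - (edispD d q : ℂ) + (ε : ℂ) * Complex.I ≠ 0 := by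
    intro q h
    have h1 : ((α : ℂ) - (edispD d q : ℂ) + (ε : ℂ) * Complex.I).im = ε := by simp
    rw [h] at h1
    simp only [Complex.zero_im] at h1
    exact hε.ne' h1.symm
  have hcont : Continuous fun q : Fin d → ℝ =>
      ((α : ℂ) - (edispD d q : ℂ) + (ε : ℂ) * Complex.I)⁻¹ := hcd.inv₀ hne
  have hint : IntegrableOn (fun q : Fin d → ℝ =>
      ((α : ℂ) - (edispD d q : ℂ) + (ε : ℂ) * Complex.I)⁻¹) (Td d) :=
    hcont.continuousOn.integrableOn_compact (isCompact_Td d)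
  have him := integral_im (μ := (volume : Measure (Fin d → ℝ)).restrict (Td d)) hint
  simp only [RCLike.im_to_complex] at him
  rw [ThetaEpsD, ← him, ← integral_neg]
  apply setIntegral_congr_fun (measurableSet_Td d)
  intro q _
  show (((α : ℂ) - (edispD d q : ℂ) + (ε : ℂ) * Complex.I)⁻¹).im
      = -(ε / ((α - edispD d q) ^ 2 + ε ^ 2))
  rw [Complex.inv_im]
  have h1 : ((α : ℂ) - (edispD d q : ℂ) + (ε : ℂ) * Complex.I).im = ε := by simp
  have h2 : Complex.normSq ((α : ℂ) - (edispD d q : ℂ) + (ε : ℂ) * Complex.I)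
      = (α - edispD d q) ^ 2 + ε ^ 2 := by
    rw [Complex.normSq_apply]
    simp
    ring
  rw [h1, h2]
  ring

/-- Reflection symmetry of the box integral. -/
lemma reflect_lintegral (d : ℕ) (G : ℝ → ℝ≥0∞) (hG : Measurable G) :
    ∫⁻ q in Bp d, G (edispD d q) = ∫⁻ q in Bp d, G (2 * d - edispD d q) := by
  have hmp : MeasurePreserving (fun q : Fin d → ℝ => (fun _ => (1:ℝ)/2) - q)
      volume volume := Measure.measurePreserving_sub_left volume _
  have hTmem : ∀ q : Fin d → ℝ, ((fun _ => (1:ℝ)/2) - q ∈ Bp d) ↔ q ∈ Bp d := by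
    intro q
    constructor
    · intro h j _
      have := h j (Set.mem_univ j)
      simp only [Pi.sub_apply] at this
      obtain ⟨h1, h2⟩ := this
      exact ⟨by linarith, by linarith⟩
    · intro h j _
      have := h j (Set.mem_univ j)
      obtain ⟨h1, h2⟩ := this
      simp only [Pi.sub_apply]
      exact ⟨by linarith, by linarith⟩
  have hGm : Measurable fun q : Fin d → ℝ =>
      Set.indicator (Bp d) (fun q => G (2 * d - edispD d q)) q :=
    (hG.comp (measurable_const.sub (measurable_edispD d))).indicator (measurableSet_Bp d)
  rw [← lintegral_indicator (measurableSet_Bp d), ← lintegral_indicator (measurableSet_Bp d)]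
  have hpt : ∀ q : Fin d → ℝ,
      Set.indicator (Bp d) (fun q => G (edispD d q)) q
        = Set.indicator (Bp d) (fun q => G (2 * d - edispD d q)) ((fun _ => (1:ℝ)/2) - q) := by
    intro q
    by_cases hq : q ∈ Bp d
    · rw [Set.indicator_of_mem hq, Set.indicator_of_mem ((hTmem q).2 hq)]
      congr 1
      have : ((fun _ => (1:ℝ)/2) - q) = fun j => 1/2 - q j := rfl
      rw [this, edispD_reflect]
      ring
    · rw [Set.indicator_of_notMem hq, Set.indicator_of_notMem (fun h => hq ((hTmem q).1 h))]
  calc ∫⁻ q, Set.indicator (Bp d) (fun q => G (edispD d q)) q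
      = ∫⁻ q, Set.indicator (Bp d) (fun q => G (2 * d - edispD d q)) ((fun _ => (1:ℝ)/2) - q) :=
        lintegral_congr hpt
    _ = _ := hmp.lintegral_comp hGm

/-- `8 D(p)² ≤ min(e(p), 2d - e(p))`. -/
lemma Dpt_sq_bound (d : ℕ) (p : Fin d → ℝ) :
    8 * Dpt d p ^ 2 ≤ min (edispD d p) (2 * d - edispD d p) := by
  have h0 : ∀ j, (0:ℝ) ≤ cdist (p j) 0 ^ 2 := fun j => sq_nonneg _
  have ht1 : tdistD d p 0 ^ 2 = ∑ j, cdist (p j) 0 ^ 2 :=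
    Real.sq_sqrt (Finset.sum_nonneg fun j _ => sq_nonneg _)
  have ht2 : tdistD d p (fun _ => 1/2) ^ 2 = ∑ j, cdist (p j) (1/2) ^ 2 :=
    Real.sq_sqrt (Finset.sum_nonneg fun j _ => sq_nonneg _)
  have hb1 : 8 * tdistD d p 0 ^ 2 ≤ edispD d p := by
    rw [ht1, Finset.mul_sum, edispD]
    apply Finset.sum_le_sum
    intro j _
    have := aux_one_sub_cos_ge (p j)
    have hcd : cdist (p j) 0 ^ 2 = (p j - (round (p j) : ℝ)) ^ 2 := by
      rw [cdist, sub_zero, sq_abs]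
    rw [hcd]; exact this
  have hb2 : 8 * tdistD d p (fun _ => 1/2) ^ 2 ≤ 2 * d - edispD d p := by
    have hsum : 2 * (d:ℝ) - edispD d p = ∑ j, (1 - Real.cos (2 * Real.pi * (p j - 1/2))) := by
      rw [edispD]
      have : ∀ j : Fin d, (1:ℝ) - Real.cos (2 * Real.pi * (p j - 1/2))
          = 2 - (1 - Real.cos (2 * Real.pi * p j)) := by
        intro j
        rw [show 2 * Real.pi * (p j - 1/2) = 2 * Real.pi * p j - Real.pi by ring,
          Real.cos_sub_pi]
        ring
      rw [Finset.sum_congr rfl fun j _ => this j, Finset.sum_sub_distrib]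
      simp [mul_comm]
    rw [hsum, ht2, Finset.mul_sum]
    apply Finset.sum_le_sum
    intro j _
    have := aux_one_sub_cos_ge (p j - 1/2)
    have hcd : cdist (p j) (1/2) ^ 2 = (p j - 1/2 - (round (p j - 1/2) : ℝ)) ^ 2 := by
      rw [cdist, sq_abs]
    rw [hcd]; exact this
  have hd1 : Dpt d p ≤ tdistD d p 0 := min_le_left _ _
  have hd2 : Dpt d p ≤ tdistD d p (fun _ => 1/2) := min_le_right _ _
  have hd0 : 0 ≤ Dpt d p := le_min (Real.sqrt_nonneg _) (Real.sqrt_nonneg _)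
  apply le_min
  · calc 8 * Dpt d p ^ 2 ≤ 8 * tdistD d p 0 ^ 2 := by nlinarith
    _ ≤ _ := hb1
  · calc 8 * Dpt d p ^ 2 ≤ 8 * tdistD d p (fun _ => 1/2) ^ 2 := by nlinarith
    _ ≤ _ := hb2

set_option maxHeartbeats 2000000 in
lemma integral_lb (n : ℕ) (hn : 2 ≤ n) (p : Fin (n + 1) → ℝ) (ε : ℝ) (hε0 : 0 < ε)
    (hD : 0 < Dpt (n + 1) p)
    (hε1 : ε ≤ min (edispD (n + 1) p) (2 * ((n:ℝ) + 1) - edispD (n + 1) p) / (4 * ((n:ℝ) + 1))) :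
    ((60:ℝ) ^ (n + 1) * ((n:ℝ) + 1) ^ (2 * (n + 1)))⁻¹ * Dpt (n + 1) p ^ (n - 1)
      ≤ ∫ q in Td (n + 1), ε / ((edispD (n + 1) p - edispD (n + 1) q) ^ 2 + ε ^ 2) := by
  have hnR : (2:ℝ) ≤ (n:ℝ) := by exact_mod_cast hn
  set α := edispD (n + 1) p with hα
  set D := Dpt (n + 1) p with hDd
  set m := min α (2 * ((n:ℝ) + 1) - α) with hm
  have hm8 : 8 * D ^ 2 ≤ m := by
    have := Dpt_sq_bound (n + 1) p
    rw [hm, hDd, hα]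
    push_cast at this ⊢
    convert this using 3 <;> push_cast <;> ring
  have hm0 : 0 < m := lt_of_lt_of_le (by positivity) hm8
  have hDm : D ≤ Real.sqrt m := by
    have h1 : D ^ 2 ≤ m := by nlinarith
    calc D = Real.sqrt (D ^ 2) := (Real.sqrt_sq hD.le).symm
    _ ≤ Real.sqrt m := Real.sqrt_le_sqrt h1
  set K := (60:ℝ) ^ (n + 1) * ((n:ℝ) + 1) ^ (2 * (n + 1)) with hK
  have hK0 : (0:ℝ) < K := by positivity
  -- core bound for the Bp-lintegral
  have hcore : ENNReal.ofReal (Real.sqrt m ^ (n - 1) / K)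
      ≤ ∫⁻ q in Bp (n + 1), ENNReal.ofReal (ε / ((α - edispD (n + 1) q) ^ 2 + ε ^ 2)) := by
    rcases le_or_gt α ((n:ℝ) + 1) with hαle | hαgt
    · have hmeq : m = α := by rw [hm]; exact min_eq_left (by linarith)
      rw [hmeq] at hm0 hε1 ⊢
      exact core_estimate n hn α ε hm0 hαle hε0 hε1
    · have hmeq : m = 2 * ((n:ℝ) + 1) - α := by rw [hm]; exact min_eq_right (by linarith)
      have hstep := core_estimate n hn m ε hm0 (by rw [hmeq]; linarith) hε0 hε1
      have hGm : Measurable (fun r : ℝ => ENNReal.ofReal (ε / ((m - r) ^ 2 + ε ^ 2))) :=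
        ENNReal.measurable_ofReal.comp
          (measurable_const.div
            (((measurable_const.sub measurable_id).pow_const 2).add measurable_const))
      have hrefl := reflect_lintegral (n + 1)
        (fun r : ℝ => ENNReal.ofReal (ε / ((m - r) ^ 2 + ε ^ 2))) hGm
      beta_reduce at hrefl
      have heq2 : ∀ q : Fin (n + 1) → ℝ,
          ENNReal.ofReal (ε / ((m - (2 * ((n + 1 : ℕ):ℝ) - edispD (n + 1) q)) ^ 2 + ε ^ 2))
            = ENNReal.ofReal (ε / ((α - edispD (n + 1) q) ^ 2 + ε ^ 2)) := by
        intro q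
        have hsq : (m - (2 * ((n + 1 : ℕ):ℝ) - edispD (n + 1) q)) ^ 2
            = (α - edispD (n + 1) q) ^ 2 := by
          rw [hmeq]; push_cast; ring
        rw [hsq]
      calc ENNReal.ofReal (Real.sqrt m ^ (n - 1) / K)
          ≤ ∫⁻ q in Bp (n + 1), ENNReal.ofReal (ε / ((m - edispD (n + 1) q) ^ 2 + ε ^ 2)) :=
            hstep
        _ = ∫⁻ q in Bp (n + 1), ENNReal.ofReal
              (ε / ((m - (2 * ((n + 1 : ℕ):ℝ) - edispD (n + 1) q)) ^ 2 + ε ^ 2)) := hrefl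
        _ = ∫⁻ q in Bp (n + 1), ENNReal.ofReal (ε / ((α - edispD (n + 1) q) ^ 2 + ε ^ 2)) :=
            lintegral_congr fun q => heq2 q
  -- pass to the torus and to the Bochner integral
  set f : (Fin (n + 1) → ℝ) → ℝ := fun q => ε / ((α - edispD (n + 1) q) ^ 2 + ε ^ 2) with hf
  have hf0 : ∀ q, 0 ≤ f q := fun q => by rw [hf]; positivity
  have hfc : Continuous f := by
    rw [hf]
    apply continuous_const.div
      (((continuous_const.sub (continuous_edispD _)).pow 2).add continuous_const)
    intro q; beta_reduce; exact ne_of_gt (add_pos_of_nonneg_of_pos (sq_nonneg _) (pow_pos hε0 2))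
  have heqR : ∫ q in Td (n + 1), f q
      = (∫⁻ q in Td (n + 1), ENNReal.ofReal (f q)).toReal :=
    integral_eq_lintegral_of_nonneg_ae (ae_of_all _ hf0) hfc.aestronglyMeasurable
  have hfin : ∫⁻ q in Td (n + 1), ENNReal.ofReal (f q) < ⊤ := by
    calc ∫⁻ q in Td (n + 1), ENNReal.ofReal (f q)
        ≤ ∫⁻ _q in Td (n + 1), ENNReal.ofReal (1 / ε) := by
          apply setLIntegral_mono' (measurableSet_Td _)
          intro q _
          apply ENNReal.ofReal_le_ofReal
          rw [hf]; beta_reduce; rw [div_le_div_iff₀ (by positivity) hε0]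
          nlinarith [sq_nonneg (α - edispD (n + 1) q), hε0]
      _ = ENNReal.ofReal (1 / ε) * volume (Td (n + 1)) := setLIntegral_const _ _
      _ < ⊤ := ENNReal.mul_lt_top ENNReal.ofReal_lt_top (isCompact_Td _).measure_lt_top
  have hmono : ∫⁻ q in Bp (n + 1), ENNReal.ofReal (f q)
      ≤ ∫⁻ q in Td (n + 1), ENNReal.ofReal (f q) := lintegral_mono_set (Bp_subset_Td _)
  have hreal : K⁻¹ * D ^ (n - 1) ≤ Real.sqrt m ^ (n - 1) / K := by
    rw [div_eq_inv_mul]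
    apply mul_le_mul_of_nonneg_left _ (by positivity)
    exact pow_le_pow_left₀ hD.le hDm _
  have hchain : ENNReal.ofReal (K⁻¹ * D ^ (n - 1))
      ≤ ∫⁻ q in Td (n + 1), ENNReal.ofReal (f q) :=
    le_trans (ENNReal.ofReal_le_ofReal hreal) (hcore.trans hmono)
  rw [show (∫ q in Td (n + 1), ε / ((edispD (n + 1) p - edispD (n + 1) q) ^ 2 + ε ^ 2))
      = ∫ q in Td (n + 1), f q from rfl, heqR]
  calc K⁻¹ * D ^ (n - 1) = (ENNReal.ofReal (K⁻¹ * D ^ (n - 1))).toReal :=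
      (ENNReal.toReal_ofReal (by positivity)).symm
  _ ≤ _ := ENNReal.toReal_mono hfin.ne hchain

set_option maxHeartbeats 2000000 in

set_option maxHeartbeats 2000000 in
/-- For every `d ≥ 3` there is `c₃ > 0` such that for every `λ > 0` and
every `p ∈ 𝕋ᵈ`, `Im ω(p) ≤ -c₃ λ² D(p)^{d-2}`, where `ω(p) = e(p) + λ² Θ(e(p))`. -/
theorem statement4 (d : ℕ) (hd : 3 ≤ d) :
    ∃ c₃ : ℝ, 0 < c₃ ∧
      ∀ Θ : ℝ → ℂ, IsThetaLimitD d Θ →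
        ∀ lam : ℝ, 0 < lam →
          ∀ p : Fin d → ℝ,
            ((edispD d p : ℂ) + (lam : ℂ) ^ 2 * Θ (edispD d p)).im ≤
              -c₃ * lam ^ 2 * Dpt d p ^ (d - 2) := by
  obtain ⟨n, rfl⟩ : ∃ n, d = n + 1 := ⟨d - 1, by omega⟩
  have hn : 2 ≤ n := by omega
  refine ⟨((60:ℝ) ^ (n + 1) * ((n:ℝ) + 1) ^ (2 * (n + 1)))⁻¹, by positivity, ?_⟩
  intro Θ hΘ lam hlam p
  set c₃ := ((60:ℝ) ^ (n + 1) * ((n:ℝ) + 1) ^ (2 * (n + 1)))⁻¹ with hc₃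
  have hc₃0 : 0 < c₃ := by rw [hc₃]; positivity
  set α := edispD (n + 1) p with hα
  set D := Dpt (n + 1) p with hDd
  have hD0 : 0 ≤ D := le_min (Real.sqrt_nonneg _) (Real.sqrt_nonneg _)
  have himeq : ((α : ℂ) + (lam : ℂ) ^ 2 * Θ α).im = lam ^ 2 * (Θ α).im := by
    simp [Complex.add_im, Complex.mul_im, pow_two, Complex.mul_re, Complex.ofReal_re,
      Complex.ofReal_im]
    try ring
  rw [himeq, show n + 1 - 2 = n - 1 from by omega]
  have hkey : (Θ α).im ≤ -(c₃ * D ^ (n - 1)) := by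
    have htd : Tendsto (fun ε : ℝ => (ThetaEpsD (n + 1) ε α).im) (𝓝[>] 0) (𝓝 (Θ α).im) :=
      (Complex.continuous_im.tendsto _).comp (hΘ α)
    apply le_of_tendsto htd
    rcases eq_or_lt_of_le hD0 with hDz | hDpos
    · filter_upwards [self_mem_nhdsWithin] with ε hε
      have hε' : (0:ℝ) < ε := hε
      rw [im_ThetaEps _ _ _ hε']
      have hz : -(c₃ * D ^ (n - 1)) = 0 := by
        rw [← hDz, zero_pow (by omega : n - 1 ≠ 0)]; ring
      rw [hz]
      have hnn : 0 ≤ ∫ q in Td (n + 1), ε / ((α - edispD (n + 1) q) ^ 2 + ε ^ 2) :=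
        setIntegral_nonneg (measurableSet_Td _) fun q _ => by positivity
      linarith
    · set m := min α (2 * ((n:ℝ) + 1) - α) with hm
      have hm8 : 8 * D ^ 2 ≤ m := by
        have := Dpt_sq_bound (n + 1) p
        rw [hm, hDd, hα]
        push_cast at this ⊢
        convert this using 3 <;> push_cast <;> ring
      have hm0 : 0 < m := lt_of_lt_of_le (by positivity) hm8
      have hε₀ : 0 < m / (4 * ((n:ℝ) + 1)) := by positivity
      filter_upwards [Ioo_mem_nhdsGT_of_mem (Set.mem_Ico.mpr ⟨le_refl (0:ℝ), hε₀⟩)]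
        with ε hε
      obtain ⟨hε1, hε2⟩ := hε
      rw [im_ThetaEps _ _ _ hε1]
      have hlb := integral_lb n hn p ε hε1 hDpos hε2.le
      rw [← hc₃, ← hα, ← hDd] at hlb
      linarith
  calc lam ^ 2 * (Θ α).im ≤ lam ^ 2 * (-(c₃ * D ^ (n - 1))) :=
    mul_le_mul_of_nonneg_left hkey (by positivity)
  _ = -c₃ * lam ^ 2 * D ^ (n - 1) := by ring

end
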